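/- arXiv:math/9711217 — 2 statements merged into one kernel-verified Lean document; each statement's English description precedes it below -/
import Mathlib

section
/- Riccati equation for the Chebyshev T moment generating function (Table 2): for every N ≥ 1, the function G(z) := Σ_{r=0}^∞ m_r^{(T)}(N) z^r is well defined and differentiable on the real interval (−1, 1), and for every z ∈ (−1, 1) it satisfies ((1 − z²) z / N) · G′(z) = (z²/N) · G(z) + (1 − z²) · G(z)² − 1. -/
/-!
Summing geometric series gives `G(z) = (1/N) ∑ₖ (1 - xₖ z)⁻¹`, where `xₖ` are the zeros of `T_N`.
With `u = 1/z` this is `(u/N) · T_N'(u) / T_N(u)`. Since `T_N'/T_N = ∑ₖ (u - xₖ)⁻¹` and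
`T_N''/T_N = (∑ₖ (u - xₖ)⁻¹)² - ∑ₖ (u - xₖ)⁻²`, dividing the Chebyshev differential equation
`(1 - u²) T_N'' = u T_N' - N² T_N` by `T_N(u)` and substituting back `z = 1/u` gives the Riccati
equation. The case `z = 0` is immediate.
-/

open Finset Real Polynomial Filter Topology

namespace Polynomial

section Field

variable {K : Type*} [Field K] {ι : Type*} {s : Finset ι} {c : K} {a : ι → K} {p : K[X]} {x : K}

theorem sub_ne_zero_of_eval_C_mul_prod_ne_zero (hp : p = C c * ∏ i ∈ s, (X - C (a i)))
    (hx : p.eval x ≠ 0) {i : ι} (hi : i ∈ s) : x - a i ≠ 0 := fun h ↦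
  hx (by simp [hp, eval_prod, prod_eq_zero (f := fun j ↦ x - a j) hi h])

theorem eval_derivative_div_eval_eq_sum_inv (hp : p = C c * ∏ i ∈ s, (X - C (a i)))
    (hx : p.eval x ≠ 0) : p.derivative.eval x / p.eval x = ∑ i ∈ s, (x - a i)⁻¹ := by
  classical
  rw [div_eq_iff hx, sum_mul, hp, derivative_C_mul, derivative_prod_finset]
  simp only [derivative_sub, derivative_X, derivative_C, sub_zero, mul_one, eval_mul, eval_C,
    eval_finsetSum, eval_prod, eval_sub, eval_X, mul_sum]
  refine sum_congr rfl fun i hi ↦ ?_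
  rw [← mul_prod_erase s (fun j ↦ x - a j) hi, mul_left_comm,
    inv_mul_cancel_left₀ (sub_ne_zero_of_eval_C_mul_prod_ne_zero hp hx hi)]

end Field

section NormedField

variable {𝕜 : Type*} [NontriviallyNormedField 𝕜] {ι : Type*} {s : Finset ι} {c : 𝕜}
  {a : ι → 𝕜} {p : 𝕜[X]} {x : 𝕜}

theorem eval_derivative_derivative_div_eval_eq_sq_sub_sum_inv_sq
    (hp : p = C c * ∏ i ∈ s, (X - C (a i))) (hx : p.eval x ≠ 0) :
    p.derivative.derivative.eval x / p.eval x =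
      (∑ i ∈ s, (x - a i)⁻¹) ^ 2 - ∑ i ∈ s, ((x - a i)⁻¹) ^ 2 := by
  have hlog : (fun y ↦ p.derivative.eval y / p.eval y) =ᶠ[𝓝 x] fun y ↦ ∑ i ∈ s, (y - a i)⁻¹ :=
    (p.continuous.continuousAt.eventually_ne hx).mono fun y hy ↦
      eval_derivative_div_eval_eq_sum_inv hp hy
  have hsum : HasDerivAt (fun y ↦ ∑ i ∈ s, (y - a i)⁻¹) (-∑ i ∈ s, ((x - a i)⁻¹) ^ 2) x := by
    rw [← sum_neg_distrib]
    refine HasDerivAt.fun_sum fun i hi ↦ ?_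
    simpa [neg_div, inv_pow] using ((hasDerivAt_id x).sub_const (a i)).fun_inv
      (sub_ne_zero_of_eval_C_mul_prod_ne_zero hp hx hi)
  have hquot := (p.derivative.hasDerivAt x).div (p.hasDerivAt x) hx
  have hderiv := hquot.unique (hsum.congr_of_eventuallyEq hlog)
  rw [← eval_derivative_div_eval_eq_sum_inv hp hx]
  field_simp at hderiv ⊢
  linear_combination hderiv

end NormedField

end Polynomial

section GeometricSums

variable {ι : Type*} {s : Finset ι}

theorem hasSum_sum_pow_mul_pow {𝕜 : Type*} [NormedField 𝕜] {a : ι → 𝕜} {z : 𝕜}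
    (h : ∀ i ∈ s, ‖a i * z‖ < 1) :
    HasSum (fun r : ℕ ↦ (∑ i ∈ s, a i ^ r) * z ^ r) (∑ i ∈ s, (1 - a i * z)⁻¹) := by
  simpa only [sum_mul, mul_pow] using hasSum_sum fun i hi ↦ hasSum_geometric_of_norm_lt_one (h i hi)

theorem hasDerivAt_sum_inv_one_sub_mul {𝕜 : Type*} [NontriviallyNormedField 𝕜] {a : ι → 𝕜}
    {z : 𝕜} (h : ∀ i ∈ s, 1 - a i * z ≠ 0) :
    HasDerivAt (fun w ↦ ∑ i ∈ s, (1 - a i * w)⁻¹) (∑ i ∈ s, a i * ((1 - a i * z)⁻¹) ^ 2) z := by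
  refine HasDerivAt.fun_sum fun i hi ↦ ?_
  simpa [neg_div, inv_pow, div_eq_mul_inv] using
    (((hasDerivAt_id z).const_mul (a i)).const_sub 1).fun_inv (h i hi)

end GeometricSums

-- Indexed from `k = 0`; the paper's `i` is `k + 1`.
noncomputable def chebyshevTZero (N k : ℕ) : ℝ := cos ((2 * k + 1) * π / (2 * N))

theorem Polynomial.Chebyshev.T_real_eq_C_mul_prod (N : ℕ) :
    T ℝ N =
      Polynomial.C (2 ^ (N - 1)) * ∏ k ∈ range N, (X - Polynomial.C (chebyshevTZero N k)) := by
  have hinj : Set.InjOn (chebyshevTZero N) (range N) :=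
    (range N).nodup_map_iff_injOn.mp (roots_T_real_nodup N)
  have hroots : (T ℝ N).roots = (range N).val.map (chebyshevTZero N) :=
    (roots_T_real N).trans (image_val_of_injOn hinj)
  have hsplit : (T ℝ N).Splits := by
    rw [splits_iff_card_roots, hroots, Multiset.card_map, card_val, card_range, natDegree_T,
      Int.natAbs_natCast]
  rw [hsplit.eq_prod_roots, hroots, leadingCoeff_T, Int.natAbs_natCast, Multiset.map_map]
  rfl

open Polynomial.Chebyshev

theorem chebyshevTZero_sum_inv_sub_riccati {N : ℕ} {u : ℝ} (hu : (T ℝ N).eval u ≠ 0) :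
    (1 - u ^ 2) * ((∑ k ∈ range N, (u - chebyshevTZero N k)⁻¹) ^ 2 -
        ∑ k ∈ range N, ((u - chebyshevTZero N k)⁻¹) ^ 2) =
      u * ∑ k ∈ range N, (u - chebyshevTZero N k)⁻¹ - N ^ 2 := by
  have hode := congr_arg (eval u) (one_sub_X_sq_mul_derivative_derivative_T_eq_poly_in_T (R := ℝ) N)
  simp only [Function.iterate_succ, Function.iterate_zero, Function.comp_apply, id_eq, eval_mul,
    eval_sub, eval_one, eval_pow, eval_X, eval_natCast, Int.cast_natCast] at hode
  rw [← eval_derivative_derivative_div_eval_eq_sq_sub_sum_inv_sq (T_real_eq_C_mul_prod N) hu,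
    ← eval_derivative_div_eval_eq_sum_inv (T_real_eq_C_mul_prod N) hu]
  field_simp
  linear_combination hode

theorem chebyshevTZero_sum_inv_one_sub_mul_riccati (N : ℕ) {z : ℝ} (hz : |z| < 1) :
    (1 - z ^ 2) * z * ∑ k ∈ range N, chebyshevTZero N k * ((1 - chebyshevTZero N k * z)⁻¹) ^ 2 =
      z ^ 2 * ∑ k ∈ range N, (1 - chebyshevTZero N k * z)⁻¹ +
        (1 - z ^ 2) * (∑ k ∈ range N, (1 - chebyshevTZero N k * z)⁻¹) ^ 2 - N ^ 2 := by
  rcases eq_or_ne z 0 with rfl | hz0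
  · simp
  obtain ⟨u, rfl⟩ : ∃ u, z = u⁻¹ := ⟨z⁻¹, (inv_inv z).symm⟩
  have hu0 : u ≠ 0 := by simpa using hz0
  have hTu : (T ℝ N).eval u ≠ 0 := by
    refine abs_pos.mp (one_pos.trans_le (one_le_abs_eval_T_real N ?_))
    rw [abs_inv] at hz
    exact ((inv_lt_one₀ (abs_pos.mpr hu0)).mp hz).le
  have hsub : ∀ k ∈ range N, u - chebyshevTZero N k ≠ 0 := fun k hk ↦
    sub_ne_zero_of_eval_C_mul_prod_ne_zero (T_real_eq_C_mul_prod N) hTu hk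
  have hS : ∑ k ∈ range N, (1 - chebyshevTZero N k * u⁻¹)⁻¹ =
      u * ∑ k ∈ range N, (u - chebyshevTZero N k)⁻¹ := by
    rw [mul_sum]
    refine sum_congr rfl fun k hk ↦ ?_
    field_simp [hsub k hk]
  have hS' : ∑ k ∈ range N, chebyshevTZero N k * ((1 - chebyshevTZero N k * u⁻¹)⁻¹) ^ 2 =
      u ^ 3 * ∑ k ∈ range N, ((u - chebyshevTZero N k)⁻¹) ^ 2 -
        u ^ 2 * ∑ k ∈ range N, (u - chebyshevTZero N k)⁻¹ := by
    rw [mul_sum, mul_sum, ← sum_sub_distrib]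
    refine sum_congr rfl fun k hk ↦ ?_
    field_simp [hsub k hk]
    ring
  rw [hS, hS']
  have key := chebyshevTZero_sum_inv_sub_riccati hTu
  generalize ∑ k ∈ range N, (u - chebyshevTZero N k)⁻¹ = S₁ at key ⊢
  generalize ∑ k ∈ range N, ((u - chebyshevTZero N k)⁻¹) ^ 2 = S₂ at key ⊢
  field_simp
  linear_combination u * key

/-- **Riccati equation for the Chebyshev `T` moment generating function.**
For every `N ≥ 1`, the function `G(z) = Σ_{r=0}^∞ m_r^{(T)}(N) z^r`, with
`m_r^{(T)}(N) = (1/N) Σ_{i=1}^N (cos((2i−1)π/(2N)))^r`, is well defined (the series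
converges) and differentiable on `(−1, 1)`, and there it satisfies
`((1 − z²) z / N) G′(z) = (z²/N) G(z) + (1 − z²) G(z)² − 1`. -/
theorem chebyshevT_moment_gf_riccati (N : ℕ) (hN : 1 ≤ N)
    (m : ℕ → ℝ)
    (hm : ∀ r, m r = (1 / (N : ℝ)) *
        ∑ i ∈ Finset.range N, (Real.cos ((2 * (i : ℝ) + 1) * Real.pi / (2 * N))) ^ r)
    (G : ℝ → ℝ) (hG : ∀ w, G w = ∑' r : ℕ, m r * w ^ r) :
    ∀ z ∈ Set.Ioo (-1 : ℝ) 1,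
      Summable (fun r : ℕ => m r * z ^ r) ∧
        ∃ g' : ℝ, HasDerivAt G g' z ∧
          ((1 - z ^ 2) * z / N) * g' =
            (z ^ 2 / N) * G z + (1 - z ^ 2) * (G z) ^ 2 - 1 := by
  have hm' : ∀ r, m r = (1 / (N : ℝ)) * ∑ k ∈ range N, chebyshevTZero N k ^ r := hm
  have hnorm : ∀ w ∈ Set.Ioo (-1 : ℝ) 1, ∀ k, ‖chebyshevTZero N k * w‖ < 1 := fun w hw k ↦ by
    rw [norm_mul, Real.norm_eq_abs, Real.norm_eq_abs]
    exact mul_lt_one_of_nonneg_of_lt_one_right (abs_cos_le_one _) (abs_nonneg w) (abs_lt.mpr hw)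
  have hsum : ∀ w ∈ Set.Ioo (-1 : ℝ) 1, HasSum (fun r ↦ m r * w ^ r)
      ((1 / N) * ∑ k ∈ range N, (1 - chebyshevTZero N k * w)⁻¹) := fun w hw ↦ by
    simpa only [hm', mul_assoc] using
      (hasSum_sum_pow_mul_pow fun k _ ↦ hnorm w hw k).mul_left (1 / (N : ℝ))
  intro z hz
  have hGeq : G =ᶠ[𝓝 z] fun w ↦ (1 / N) * ∑ k ∈ range N, (1 - chebyshevTZero N k * w)⁻¹ :=
    eventually_of_mem (isOpen_Ioo.mem_nhds hz) fun w hw ↦ (hG w).trans (hsum w hw).tsum_eq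
  have hderiv := (hasDerivAt_sum_inv_one_sub_mul (s := range N) fun k _ ↦
    (isUnit_one_sub_of_norm_lt_one (hnorm z hz k)).ne_zero).const_mul (1 / (N : ℝ))
  refine ⟨(hsum z hz).summable, _, hderiv.congr_of_eventuallyEq hGeq, ?_⟩
  have hN0 : (N : ℝ) ≠ 0 := by positivity
  rw [hGeq.eq_of_nhds]
  have key := chebyshevTZero_sum_inv_one_sub_mul_riccati N (abs_lt.mpr hz)
  generalize ∑ k ∈ range N, (1 - chebyshevTZero N k * z)⁻¹ = F at key ⊢
  generalize ∑ k ∈ range N, chebyshevTZero N k * ((1 - chebyshevTZero N k * z)⁻¹) ^ 2 = F' at key ⊢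
  field_simp
  linear_combination key
end

section
/- Case's equation for the moments of Chebyshev U zeros (Table 4): for every N ≥ 1 and every r ≥ 1, (2N − (r−1)) · m_{r+1}^{(U)}(N) = −r · m_{r−1}^{(U)}(N) + N · Σ_{s=0}^{r−1} ( m_{r−1−s}^{(U)}(N) · m_s^{(U)}(N) − m_{r−s}^{(U)}(N) · m_{s+1}^{(U)}(N) ). -/
/-!
The zeros `x_j` of `U_N` are simple, so evaluating the differential equation
`(1 - x²) U'' = 3x U' - N(N+2) U` at them gives the Stieltjes relations
`2 (1 - x_j²) Σ_{i ≠ j} 1/(x_j - x_i) = 3 x_j`. Multiply by `x_j^r`, sum over `j` and symmetrise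
in `(i, j)`: the left side becomes a double sum of divided differences of `x^r - x^(r+2)`, which
are polynomials in `x_i, x_j`, so it expands into products of the power sums `p_a = N m_a`.
-/

open Finset Real

namespace Polynomial

variable {K : Type*} [Field K] [DecidableEq K]

theorem eval_derivative_prod_X_sub_C_of_notMem {t : Finset K} {x : K} (hx : x ∉ t) :
    eval x (derivative (∏ a ∈ t, (X - C a))) =
      eval x (∏ a ∈ t, (X - C a)) * ∑ a ∈ t, (x - a)⁻¹ := by
  rw [derivative_prod_finset, eval_finsetSum, mul_sum]
  refine sum_congr rfl fun a ha => ?_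
  have hxa : x - a ≠ 0 := sub_ne_zero.mpr (ne_of_mem_of_not_mem ha hx).symm
  rw [derivative_X_sub_C, mul_one, eval_prod, eval_prod, ← mul_prod_erase t _ ha]
  simp only [eval_sub, eval_X, eval_C]
  rw [mul_comm (x - a), mul_inv_cancel_right₀ hxa]

theorem eval_derivative_prod_X_sub_C_of_mem {s : Finset K} {x : K} (hx : x ∈ s) :
    eval x (derivative (∏ a ∈ s, (X - C a))) = ∏ a ∈ s.erase x, (x - a) := by
  have h := eval_multiset_prod_X_sub_C_derivative (S := s.val) hx
  rwa [← erase_val, ← prod_eq_multiset_prod, ← prod_eq_multiset_prod] at h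

theorem eval_derivative_derivative_prod_X_sub_C {s : Finset K} {x : K} (hx : x ∈ s) :
    eval x (derivative (derivative (∏ a ∈ s, (X - C a)))) =
      2 * eval x (derivative (∏ a ∈ s, (X - C a))) * ∑ a ∈ s.erase x, (x - a)⁻¹ := by
  set Q := ∏ a ∈ s.erase x, (X - C a)
  have hP : ∏ a ∈ s, (X - C a) = (X - C x) * Q := (mul_prod_erase s _ hx).symm
  have hP' : derivative (∏ a ∈ s, (X - C a)) = Q + (X - C x) * derivative Q := by
    rw [hP, derivative_mul, derivative_X_sub_C, one_mul]
  have hP'' : derivative (derivative (∏ a ∈ s, (X - C a))) =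
      2 * derivative Q + (X - C x) * derivative (derivative Q) := by
    rw [hP', derivative_add, derivative_mul, derivative_X_sub_C, one_mul]
    ring
  have hQ' : eval x (derivative Q) = eval x Q * ∑ a ∈ s.erase x, (x - a)⁻¹ :=
    eval_derivative_prod_X_sub_C_of_notMem (notMem_erase x s)
  rw [hP'', hP']
  simp only [eval_add, eval_mul, eval_sub, eval_X, eval_C, eval_ofNat, sub_self, zero_mul, add_zero,
    hQ']
  ring

end Polynomial

namespace Finset

variable {K : Type*} [Field K]

def powerSum (s : Finset K) (n : ℕ) : K := ∑ x ∈ s, x ^ n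

theorem sum_sum_sub_div_sub (s : Finset K) (f : K → K) :
    ∑ x ∈ s, ∑ a ∈ s, (f x - f a) / (x - a) = 2 * ∑ x ∈ s, ∑ a ∈ s, f x / (x - a) := by
  have hswap : ∑ x ∈ s, ∑ a ∈ s, f a / (x - a) = -∑ x ∈ s, ∑ a ∈ s, f x / (x - a) := by
    rw [sum_comm, ← sum_neg_distrib]
    refine sum_congr rfl fun x _ => ?_
    rw [← sum_neg_distrib]
    exact sum_congr rfl fun a _ => by rw [← neg_sub, div_neg]
  simp only [sub_div, sum_sub_distrib, hswap]
  ring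

@[simp]
theorem powerSum_zero (s : Finset K) : s.powerSum 0 = #s := by
  simp [powerSum]

variable [DecidableEq K]

theorem sum_sum_pow_sub_pow_div_sub (s : Finset K) (n : ℕ) :
    ∑ x ∈ s, ∑ a ∈ s, (x ^ n - a ^ n) / (x - a) =
      ∑ t ∈ range n, s.powerSum t * s.powerSum (n - 1 - t) - n * s.powerSum (n - 1) := by
  have hrow : ∀ x ∈ s, ∑ a ∈ s, (x ^ n - a ^ n) / (x - a) =
      ∑ a ∈ s, ∑ t ∈ range n, x ^ t * a ^ (n - 1 - t) - n * x ^ (n - 1) := by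
    intro x hx
    have hdiag : ∑ t ∈ range n, x ^ t * x ^ (n - 1 - t) = n * x ^ (n - 1) := by
      rw [sum_congr rfl fun t ht => by rw [← pow_add, Nat.add_sub_of_le (by simp at ht; omega)]]
      simp
    rw [← sum_erase s (a := x) (by simp), ← hdiag, ← sum_erase_eq_sub hx]
    refine sum_congr rfl fun a ha => ?_
    rw [div_eq_iff (sub_ne_zero.mpr (ne_of_mem_erase ha).symm), geom_sum₂_mul]
  rw [sum_congr rfl hrow, sum_sub_distrib, ← mul_sum]
  simp only [powerSum, sum_mul_sum]
  rw [sum_comm (s := range n)]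
  exact congrArg (· - _) (sum_congr rfl fun x _ => sum_comm)

theorem powerSum_recurrence {s : Finset K}
    (hs : ∀ x ∈ s, 2 * (1 - x ^ 2) * ∑ a ∈ s.erase x, (x - a)⁻¹ = 3 * x) (r : ℕ) :
    (2 * (#s : K) - r + 1) * s.powerSum (r + 1) =
      -r * s.powerSum (r - 1) +
        ∑ t ∈ range r,
          (s.powerSum (r - 1 - t) * s.powerSum t - s.powerSum (r - t) * s.powerSum (t + 1)) := by
  set p := s.powerSum
  have hweighted : 2 * ∑ x ∈ s, ∑ a ∈ s, (x ^ r - x ^ (r + 2)) / (x - a) = 3 * p (r + 1) := by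
    rw [mul_sum, show p (r + 1) = ∑ x ∈ s, x ^ (r + 1) from rfl, mul_sum]
    refine sum_congr rfl fun x hx => ?_
    simp only [div_eq_mul_inv, ← mul_sum]
    -- the diagonal term `a = x` vanishes because `(x - x)⁻¹ = 0`
    rw [← sum_erase s (a := x) (by simp)]
    linear_combination x ^ r * hs x hx
  have hdiff : 3 * p (r + 1) =
      (∑ t ∈ range r, p t * p (r - 1 - t) - r * p (r - 1)) -
        (∑ t ∈ range (r + 2), p t * p (r + 2 - 1 - t) - ((r + 2 : ℕ) : K) * p (r + 2 - 1)) := by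
    rw [← hweighted, ← sum_sum_sub_div_sub, ← sum_sum_pow_sub_pow_div_sub,
      ← sum_sum_pow_sub_pow_div_sub, ← sum_sub_distrib]
    refine sum_congr rfl fun x _ => ?_
    rw [← sum_sub_distrib]
    exact sum_congr rfl fun a _ => by ring
  have hsplit : ∑ t ∈ range (r + 2), p t * p (r + 1 - t) =
      2 * #s * p (r + 1) + ∑ t ∈ range r, p (t + 1) * p (r - t) := by
    rw [sum_range_succ, sum_range_succ', Nat.sub_self, Nat.sub_zero,
      show p 0 = #s from powerSum_zero s]
    simp only [Nat.add_sub_add_right]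
    ring
  have hcomm : ∀ f g : ℕ → ℕ, ∑ t ∈ range r, p (f t) * p (g t) = ∑ t ∈ range r, p (g t) * p (f t) :=
    fun f g => sum_congr rfl fun _ _ => mul_comm _ _
  rw [sum_sub_distrib, hcomm (r - 1 - ·), hcomm (r - ·)]
  push_cast at hdiff
  linear_combination hdiff - hsplit

end Finset

namespace Polynomial.Chebyshev

noncomputable def zerosU (n : ℕ) : Finset ℝ :=
  (range n).image fun k : ℕ => cos ((k + 1) * π / (n + 1))

theorem injOn_cos_succ_mul_pi_div (n : ℕ) :
    Set.InjOn (fun k : ℕ => cos ((k + 1) * π / (n + 1))) (range n) :=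
  (range n).nodup_map_iff_injOn.mp (roots_U_real_nodup n)

theorem card_zerosU (n : ℕ) : #(zerosU n) = n := by
  rw [zerosU, card_image_of_injOn (injOn_cos_succ_mul_pi_div n), card_range]

theorem powerSum_zerosU (n r : ℕ) :
    (zerosU n).powerSum r = ∑ k ∈ range n, cos ((k + 1) * π / (n + 1)) ^ r := by
  rw [powerSum, zerosU, sum_image (injOn_cos_succ_mul_pi_div n)]

theorem U_real_eq_C_mul_prod (n : ℕ) :
    U ℝ n = Polynomial.C (2 ^ n) * ∏ a ∈ zerosU n, (X - Polynomial.C a) := by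
  have hroots : (U ℝ n).roots = (zerosU n).val := roots_U_real n
  have hcard : Multiset.card (U ℝ n).roots = (U ℝ n).natDegree := by
    rw [hroots, ← Finset.card_def, card_zerosU, natDegree_U_natCast]
  rw [← C_leadingCoeff_mul_prod_multiset_X_sub_C hcard, hroots, leadingCoeff_U_natCast,
    prod_eq_multiset_prod]

theorem two_mul_one_sub_sq_mul_sum_inv_sub_zerosU {n : ℕ} {x : ℝ} (hx : x ∈ zerosU n) :
    2 * (1 - x ^ 2) * ∑ a ∈ (zerosU n).erase x, (x - a)⁻¹ = 3 * x := by
  set P := ∏ a ∈ zerosU n, (X - Polynomial.C a)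
  have hU := U_real_eq_C_mul_prod n
  have hroot : eval x (U ℝ n) = 0 := by
    rw [hU, eval_C_mul, eval_prod, prod_eq_zero hx (by simp), mul_zero]
  have hU' : eval x (derivative (U ℝ n)) = 2 ^ n * eval x (derivative P) := by
    rw [hU, derivative_C_mul, eval_C_mul]
  have hU'' : eval x (derivative (derivative (U ℝ n))) =
      2 ^ n * (2 * eval x (derivative P) * ∑ a ∈ (zerosU n).erase x, (x - a)⁻¹) := by
    rw [hU, derivative_C_mul, derivative_C_mul, eval_C_mul,
      eval_derivative_derivative_prod_X_sub_C hx]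
  have hsimple : eval x (derivative P) ≠ 0 := by
    rw [eval_derivative_prod_X_sub_C_of_mem hx]
    exact prod_ne_zero_iff.mpr fun a ha => sub_ne_zero.mpr (ne_of_mem_erase ha).symm
  have hode := one_sub_X_sq_mul_iterate_derivative_U_eval (R := ℝ) n 0 x
  simp only [zero_add, Function.iterate_succ_apply', Function.iterate_zero_apply, hroot, hU', hU'']
    at hode
  have h2n : (2 : ℝ) ^ n ≠ 0 := by positivity
  apply mul_left_cancel₀ (mul_ne_zero h2n hsimple)
  linear_combination hode

end Polynomial.Chebyshev

theorem chebyshevU_case_equation_general (N : ℕ) (hN : 1 ≤ N)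
    (m : ℕ → ℝ)
    (hm : ∀ r, m r = (1 / (N : ℝ)) *
        ∑ k ∈ Finset.range N, (Real.cos (((k : ℝ) + 1) * Real.pi / (N + 1))) ^ r)
    (r : ℕ) :
    (2 * (N : ℝ) - ((r : ℝ) - 1)) * m (r + 1) =
      -(r : ℝ) * m (r - 1) +
        (N : ℝ) * ∑ s ∈ Finset.range r, (m (r - 1 - s) * m s - m (r - s) * m (s + 1)) := by
  have hN0 : (N : ℝ) ≠ 0 := Nat.cast_ne_zero.mpr (by omega)
  have hp : ∀ a, (Polynomial.Chebyshev.zerosU N).powerSum a = N * m a := fun a => by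
    rw [hm, Polynomial.Chebyshev.powerSum_zerosU, one_div, mul_inv_cancel_left₀ hN0]
  have key := powerSum_recurrence
    (fun _ hx => Polynomial.Chebyshev.two_mul_one_sub_sq_mul_sum_inv_sub_zerosU (n := N) hx) r
  have hfactor : ∑ t ∈ range r, (N * m (r - 1 - t) * (N * m t) - N * m (r - t) * (N * m (t + 1))) =
      N ^ 2 * ∑ t ∈ range r, (m (r - 1 - t) * m t - m (r - t) * m (t + 1)) := by
    rw [mul_sum]
    exact sum_congr rfl fun _ _ => by ring
  rw [Polynomial.Chebyshev.card_zerosU] at key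
  simp only [hp, hfactor] at key
  apply mul_left_cancel₀ hN0
  linear_combination key

/-- **Case's equation for the moments of Chebyshev `U` zeros.** For every `N ≥ 1`
and `r ≥ 1`, with `m_r = m_r^{(U)}(N) = (1/N) Σ_{k=1}^N (cos(kπ/(N+1)))^r`:
`(2N − (r−1)) m_{r+1} = −r·m_{r−1} + N Σ_{s=0}^{r−1} (m_{r−1−s} m_s − m_{r−s} m_{s+1})`. -/
theorem chebyshevU_case_equation (N : ℕ) (hN : 1 ≤ N)
    (m : ℕ → ℝ)
    (hm : ∀ r, m r = (1 / (N : ℝ)) *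
        ∑ k ∈ Finset.range N, (Real.cos (((k : ℝ) + 1) * Real.pi / (N + 1))) ^ r)
    (r : ℕ) (hr : 1 ≤ r) :
    (2 * (N : ℝ) - ((r : ℝ) - 1)) * m (r + 1) =
      -(r : ℝ) * m (r - 1) +
        (N : ℝ) * ∑ s ∈ Finset.range r, (m (r - 1 - s) * m s - m (r - s) * m (s + 1)) :=
  chebyshevU_case_equation_general N hN m hm r
end
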